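/- arXiv:2106.00664 — 3 statements merged into one kernel-verified Lean document; each statement's English description precedes it below -/
import Mathlib

section
/- Let S be a type, Init Bad : Set S, and Tr : S → S → Prop, and let F_0, ..., F_N ⊆ S be a monotone inductive trace, i.e. Init ⊆ F_0, post(F_i) ⊆ F_{i+1}, and F_i ⊆ F_{i+1} for all 0 ≤ i < N. If F_N ∩ Bad = ∅, then the transition system has no counterexample of length k for any k ≤ N. -/
/-!
By induction along a counterexample x₀, …, x_k, each xᵢ lies in Fᵢ; monotonicity of the frames
then puts x_k in F_N, which is disjoint from Bad.
-/

theorem monotoneOn_Iic_of_le_succ {α : Type*} [Preorder α] {f : ℕ → α} {N : ℕ}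
    (hf : ∀ n < N, f n ≤ f (n + 1)) : MonotoneOn f (Set.Iic N) := by
  -- clamping the index at `N` extends `f` to a sequence monotone on all of `ℕ`
  have hmono : Monotone fun n ↦ f (min n N) := by
    refine monotone_nat_of_le_succ fun n ↦ ?_
    rcases lt_or_ge n N with hn | hn
    · simpa [min_eq_left hn.le, min_eq_left (Nat.succ_le_of_lt hn)] using hf n hn
    · simp [min_eq_right hn, min_eq_right (hn.trans n.le_succ)]
  intro a ha b hb hab
  simpa [min_eq_left (Set.mem_Iic.mp ha), min_eq_left (Set.mem_Iic.mp hb)] using hmono hab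

theorem mem_frame_of_path {S : Type*} {Init : Set S} {Tr : S → S → Prop} {F : ℕ → Set S}
    {k : ℕ} {x : ℕ → S} (hInit : Init ⊆ F 0)
    (hPost : ∀ i < k, {y | ∃ x ∈ F i, Tr x y} ⊆ F (i + 1))
    (hx0 : x 0 ∈ Init) (hstep : ∀ i < k, Tr (x i) (x (i + 1))) :
    ∀ i ≤ k, x i ∈ F i
  | 0, _ => hInit hx0
  | i + 1, hi =>
    hPost i hi ⟨x i, mem_frame_of_path hInit hPost hx0 hstep i (Nat.le_of_succ_le hi), hstep i hi⟩

/-- A monotone inductive trace whose last frame excludes Bad rules out all counterexamples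
of length at most N. -/
theorem trace_no_short_cex {S : Type*} (Init Bad : Set S) (Tr : S → S → Prop)
    (N : ℕ) (F : ℕ → Set S)
    (hInit : Init ⊆ F 0)
    (hPost : ∀ i < N, {y | ∃ x ∈ F i, Tr x y} ⊆ F (i + 1))
    (hMono : ∀ i < N, F i ⊆ F (i + 1))
    (hBad : F N ∩ Bad = ∅) :
    ∀ k ≤ N, ¬ ∃ x : ℕ → S, x 0 ∈ Init ∧ (∀ i < k, Tr (x i) (x (i + 1))) ∧ x k ∈ Bad := by
  rintro k hk ⟨x, hx0, hstep, hxBad⟩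
  have hxk : x k ∈ F k :=
    mem_frame_of_path hInit (fun i hi ↦ hPost i (hi.trans_le hk)) hx0 hstep k le_rfl
  have hxN : x k ∈ F N :=
    monotoneOn_Iic_of_le_succ hMono (Set.mem_Iic.mpr hk) Set.self_mem_Iic hk hxk
  exact Set.eq_empty_iff_forall_notMem.mp hBad (x k) ⟨hxN, hxBad⟩
end

section
/- Let S be a type, Init : Set S, and Tr : S → S → Prop, and let F_0, ..., F_N ⊆ S be a monotone inductive trace (Init ⊆ F_0, post(F_i) ⊆ F_{i+1}, F_i ⊆ F_{i+1} for all 0 ≤ i < N). Fix i < N and let L ⊆ S be a set such that Init ⊆ L and post(F_i ∩ L) ⊆ L. Define G_j = F_j ∩ L for j ≤ i+1 and G_j = F_j for i+1 < j ≤ N. Then G_0, ..., G_N is again a monotone inductive trace: Init ⊆ G_0, post(G_j) ⊆ G_{j+1}, and G_j ⊆ G_{j+1} for all 0 ≤ j < N. -/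
/-!
Below frame `i + 1` the new frames are `F j ∩ L`; since `F j ⊆ F i` for `j ≤ i`, relative
inductiveness of `L` keeps the successors of `F j ∩ L` inside `L`. Above `i + 1` the frames are
unchanged, and the step from `i + 1` to `i + 2` survives because the new frames only shrank.
-/

namespace TransitionSystem

variable {S : Type*}

def post (Tr : S → S → Prop) (A : Set S) : Set S := {y | ∃ x ∈ A, Tr x y}

theorem post_mono (Tr : S → S → Prop) {A B : Set S} (h : A ⊆ B) : post Tr A ⊆ post Tr B :=
  fun _ ⟨x, hx, hxy⟩ => ⟨x, h hx, hxy⟩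

structure IsMonotoneInductiveTrace (Init : Set S) (Tr : S → S → Prop) (N : ℕ) (F : ℕ → Set S) :
    Prop where
  init_subset : Init ⊆ F 0
  post_subset : ∀ j < N, post Tr (F j) ⊆ F (j + 1)
  frame_subset_succ : ∀ j < N, F j ⊆ F (j + 1)

def pushFrames (F : ℕ → Set S) (i : ℕ) (L : Set S) : ℕ → Set S :=
  fun j => if j ≤ i + 1 then F j ∩ L else F j

section pushFrames

variable {F : ℕ → Set S} {i j : ℕ} {L : Set S}

theorem pushFrames_of_le (h : j ≤ i + 1) : pushFrames F i L j = F j ∩ L := if_pos h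

theorem pushFrames_of_lt (h : i + 1 < j) : pushFrames F i L j = F j := if_neg (by omega)

theorem pushFrames_subset : pushFrames F i L j ⊆ F j := by
  unfold pushFrames
  split_ifs
  exacts [Set.inter_subset_left, subset_rfl]

end pushFrames

namespace IsMonotoneInductiveTrace

variable {Init : Set S} {Tr : S → S → Prop} {N : ℕ} {F : ℕ → Set S}

theorem frame_subset (hF : IsMonotoneInductiveTrace Init Tr N F) {a b : ℕ} (hab : a ≤ b)
    (hbN : b ≤ N) : F a ⊆ F b := by
  induction b, hab using Nat.le_induction with
  | base => exact subset_rfl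
  | succ b _ ih => exact (ih (by omega)).trans (hF.frame_subset_succ b (by omega))

theorem pushFrames {i : ℕ} {L : Set S} (hF : IsMonotoneInductiveTrace Init Tr N F) (hi : i < N)
    (hLInit : Init ⊆ L) (hLInd : post Tr (F i ∩ L) ⊆ L) :
    IsMonotoneInductiveTrace Init Tr N (pushFrames F i L) where
  init_subset := by
    rw [pushFrames_of_le (Nat.zero_le _)]
    exact Set.subset_inter hF.init_subset hLInit
  post_subset j hj := by
    rcases le_or_gt j i with hji | hij
    · rw [pushFrames_of_le (j := j) (by omega), pushFrames_of_le (j := j + 1) (by omega)]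
      have hjL : F j ∩ L ⊆ F i ∩ L := Set.inter_subset_inter_left L (hF.frame_subset hji hi.le)
      exact Set.subset_inter
        ((post_mono Tr Set.inter_subset_left).trans (hF.post_subset j hj))
        ((post_mono Tr hjL).trans hLInd)
    · rw [pushFrames_of_lt (j := j + 1) (by omega)]
      exact (post_mono Tr pushFrames_subset).trans (hF.post_subset j hj)
  frame_subset_succ j hj := by
    rcases le_or_gt j i with hji | hij
    · rw [pushFrames_of_le (j := j) (by omega), pushFrames_of_le (j := j + 1) (by omega)]
      exact Set.inter_subset_inter_left L (hF.frame_subset_succ j hj)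
    · rw [pushFrames_of_lt (j := j + 1) (by omega)]
      exact pushFrames_subset.trans (hF.frame_subset_succ j hj)

end IsMonotoneInductiveTrace

end TransitionSystem

/-- Soundness of the Push rule: intersecting all frames up to i+1 with a lemma L satisfying
Init ⊆ L and post(F i ∩ L) ⊆ L preserves the monotone inductive trace properties. -/
theorem push_rule_sound {S : Type*} (Init : Set S) (Tr : S → S → Prop)
    (N : ℕ) (F : ℕ → Set S)
    (hInit : Init ⊆ F 0)
    (hPost : ∀ i < N, {y | ∃ x ∈ F i, Tr x y} ⊆ F (i + 1))
    (hMono : ∀ i < N, F i ⊆ F (i + 1))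
    (i : ℕ) (hi : i < N) (L : Set S)
    (hLInit : Init ⊆ L)
    (hLInd : {y | ∃ x ∈ F i ∩ L, Tr x y} ⊆ L) :
    let G : ℕ → Set S := fun j => if j ≤ i + 1 then F j ∩ L else F j
    Init ⊆ G 0 ∧ (∀ j < N, {y | ∃ x ∈ G j, Tr x y} ⊆ G (j + 1)) ∧
      (∀ j < N, G j ⊆ G (j + 1)) := by
  have hF : TransitionSystem.IsMonotoneInductiveTrace Init Tr N F := ⟨hInit, hPost, hMono⟩
  have hG := hF.pushFrames hi hLInit hLInd
  exact ⟨hG.init_subset, hG.post_subset, hG.frame_subset_succ⟩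
end

section
/- Let S be a type, Init Bad : Set S, and Tr : S → S → Prop, and let F_0, ..., F_N ⊆ S be a monotone inductive trace (Init ⊆ F_0, post(F_i) ⊆ F_{i+1}, F_i ⊆ F_{i+1} for all 0 ≤ i < N) with F_N ∩ Bad = ∅. Then for every j ≤ N, no state of F_{N-j} can reach Bad in exactly j transition steps; i.e., there is no sequence x_0, ..., x_j with x_0 ∈ F_{N-j}, (x_i, x_{i+1}) ∈ Tr for all 0 ≤ i < j, and x_j ∈ Bad. -/
theorem mem_frame_add_of_path {S : Type*} {Tr : S → S → Prop} {F : ℕ → Set S} {a j : ℕ}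
    (hPost : ∀ i < j, {y | ∃ x ∈ F (a + i), Tr x y} ⊆ F (a + i + 1))
    {x : ℕ → S} (h0 : x 0 ∈ F a) (hstep : ∀ i < j, Tr (x i) (x (i + 1))) :
    ∀ k ≤ j, x k ∈ F (a + k)
  | 0, _ => h0
  | k + 1, hk =>
    hPost k hk ⟨x k, mem_frame_add_of_path hPost h0 hstep k (Nat.le_of_succ_le hk), hstep k hk⟩

theorem blocking_invariant_general {S : Type*} (Bad : Set S) (Tr : S → S → Prop)
    (N : ℕ) (F : ℕ → Set S)
    (hPost : ∀ i < N, {y | ∃ x ∈ F i, Tr x y} ⊆ F (i + 1))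
    (hBad : F N ∩ Bad = ∅) :
    ∀ j ≤ N, ¬ ∃ x : ℕ → S, x 0 ∈ F (N - j) ∧ (∀ i < j, Tr (x i) (x (i + 1))) ∧ x j ∈ Bad := by
  rintro j hj ⟨x, h0, hstep, hbad⟩
  have hxN : x j ∈ F N := by
    have := mem_frame_add_of_path (fun i hi => hPost (N - j + i) (by omega)) h0 hstep j le_rfl
    rwa [Nat.sub_add_cancel hj] at this
  exact (Set.eq_empty_iff_forall_notMem.mp hBad) (x j) ⟨hxN, hbad⟩

/-- Blocking invariant of IC3/Quic3: once Bad is excluded from frame N, frame N-j contains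
no state backward-reachable from Bad in exactly j steps. -/
theorem blocking_invariant {S : Type*} (Init Bad : Set S) (Tr : S → S → Prop)
    (N : ℕ) (F : ℕ → Set S)
    (hInit : Init ⊆ F 0)
    (hPost : ∀ i < N, {y | ∃ x ∈ F i, Tr x y} ⊆ F (i + 1))
    (hMono : ∀ i < N, F i ⊆ F (i + 1))
    (hBad : F N ∩ Bad = ∅) :
    ∀ j ≤ N, ¬ ∃ x : ℕ → S, x 0 ∈ F (N - j) ∧ (∀ i < j, Tr (x i) (x (i + 1))) ∧ x j ∈ Bad :=
  blocking_invariant_general Bad Tr N F hPost hBad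
end
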